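/- arXiv:2501.18762 — 3 statements merged into one kernel-verified Lean document; each statement's English description precedes it below -/
import Mathlib

section
/- Let Ŝ(k) = (1/√(1+k²)) · [rows ((1+ik, 1+ik), (−i√(1+k²), i√(1+k²)))] for k ∈ ℝ. Then there exists a constant C > 0 such that for all k ∈ ℝ, the operator norm of Ŝ(k) and the operator norm of Ŝ(k)⁻¹ are both bounded by C; in particular sup_{k∈ℝ} ‖Ŝ(k)‖ + sup_{k∈ℝ} ‖Ŝ(k)⁻¹‖ < ∞. -/
/-!
The columns of `Ŝ(k)` are orthogonal of common length `√2`: writing `u = (1 + ik)/√(1+k²)`,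
which has modulus one, `Ŝ(k) = !![u, u; -i, i]` and `Ŝ(k)ᴴ Ŝ(k) = 2`. So `Ŝ(k)/√2` is unitary,
`‖Ŝ(k)‖ = √2` and `Ŝ(k)⁻¹ = Ŝ(k)ᴴ / 2` has norm `√2 / 2`, independently of `k`.
-/

open Complex Matrix

theorem norm_eq_sqrt_of_star_mul_self_eq_smul_one {𝕜 R : Type*} [NormedField 𝕜] [NormedRing R]
    [StarRing R] [CStarRing R] [NormOneClass R] [NormedAlgebra 𝕜 R] {a : R} {c : 𝕜}
    (h : star a * a = c • 1) : ‖a‖ = √‖c‖ := by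
  rw [← Real.sqrt_mul_self (norm_nonneg a), ← CStarRing.norm_star_mul_self, h, norm_smul,
    norm_one, mul_one]

namespace Matrix

variable {𝕜 n : Type*} [RCLike 𝕜] [Fintype n] [DecidableEq n]

theorem inv_eq_smul_conjTranspose_of_conjTranspose_mul_self_eq_smul_one {A : Matrix n n 𝕜}
    {c : 𝕜} (hc : c ≠ 0) (h : Aᴴ * A = c • 1) : A⁻¹ = c⁻¹ • Aᴴ :=
  inv_eq_left_inv <| by rw [smul_mul, h, smul_smul, inv_mul_cancel₀ hc, one_smul]

variable [Nonempty n]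

theorem norm_toEuclideanCLM_of_conjTranspose_mul_self_eq_smul_one {A : Matrix n n 𝕜} {c : 𝕜}
    (h : Aᴴ * A = c • 1) : ‖toEuclideanCLM (𝕜 := 𝕜) (n := n) A‖ = √‖c‖ :=
  norm_eq_sqrt_of_star_mul_self_eq_smul_one (𝕜 := 𝕜) <| by
    rw [← map_star, ← map_mul, star_eq_conjTranspose, h, map_smul, map_one]

theorem norm_toEuclideanCLM_inv_of_conjTranspose_mul_self_eq_smul_one {A : Matrix n n 𝕜}
    {c : 𝕜} (hc : c ≠ 0) (h : Aᴴ * A = c • 1) :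
    ‖toEuclideanCLM (𝕜 := 𝕜) (n := n) A⁻¹‖ = ‖c‖⁻¹ * √‖c‖ := by
  rw [inv_eq_smul_conjTranspose_of_conjTranspose_mul_self_eq_smul_one hc h, map_smul,
    norm_smul, ← star_eq_conjTranspose, map_star,
    ContinuousLinearMap.star_eq_adjoint, LinearIsometryEquiv.norm_map,
    norm_toEuclideanCLM_of_conjTranspose_mul_self_eq_smul_one h, norm_inv]

end Matrix

theorem conjTranspose_mul_self_of_norm_eq_one {u : ℂ} (hu : ‖u‖ = 1) :
    (!![u, u; -I, I])ᴴ * !![u, u; -I, I] = (2 : ℂ) • 1 := by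
  have hu' : (starRingEnd ℂ) u * u = 1 := by rw [conj_mul', hu]; norm_num
  ext i j
  fin_cases i <;> fin_cases j <;> simp [Matrix.mul_apply, hu'] <;> norm_num

theorem norm_one_add_I_mul_div_sqrt (k : ℝ) : ‖(1 + I * k) / √(1 + k ^ 2)‖ = 1 := by
  have hpos : 0 < √(1 + k ^ 2) := Real.sqrt_pos.2 (by positivity)
  rw [norm_div, norm_real, Real.norm_of_nonneg hpos.le, div_eq_one_iff_eq hpos.ne', mul_comm,
    ← ofReal_one, norm_add_mul_I]
  norm_num

/-- Uniform boundedness of the diagonalizing matrices `Ŝ(k)` and `Ŝ(k)⁻¹`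
(in the operator norm on `ℂ²` with the euclidean norm) over all `k ∈ ℝ`. -/
theorem diagonalizer_uniformly_bounded
    (S : ℝ → Matrix (Fin 2) (Fin 2) ℂ)
    (hS : ∀ k : ℝ, S k =
      ((Real.sqrt (1 + k ^ 2) : ℂ))⁻¹ •
        !![1 + Complex.I * (k : ℂ), 1 + Complex.I * (k : ℂ);
           -Complex.I * (Real.sqrt (1 + k ^ 2) : ℂ),
            Complex.I * (Real.sqrt (1 + k ^ 2) : ℂ)]) :
    (∃ C : ℝ, 0 < C ∧ ∀ k : ℝ,
        ‖Matrix.toEuclideanCLM (𝕜 := ℂ) (n := Fin 2) (S k)‖ ≤ C ∧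
        ‖Matrix.toEuclideanCLM (𝕜 := ℂ) (n := Fin 2) ((S k)⁻¹)‖ ≤ C)
    ∧ BddAbove (Set.range fun k : ℝ =>
        ‖Matrix.toEuclideanCLM (𝕜 := ℂ) (n := Fin 2) (S k)‖ +
        ‖Matrix.toEuclideanCLM (𝕜 := ℂ) (n := Fin 2) ((S k)⁻¹)‖) := by
  have hSk (k : ℝ) : (S k)ᴴ * S k = (2 : ℂ) • 1 := by
    have hr : (√(1 + k ^ 2) : ℂ) ≠ 0 := ofReal_ne_zero.2 (Real.sqrt_pos.2 (by positivity)).ne'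
    have hform : S k = !![(1 + I * k) / √(1 + k ^ 2), (1 + I * k) / √(1 + k ^ 2); -I, I] := by
      rw [hS k]
      ext i j
      fin_cases i <;> fin_cases j <;> simp [inv_mul_eq_div, mul_div_cancel_right₀ _ hr]
    rw [hform, conjTranspose_mul_self_of_norm_eq_one (norm_one_add_I_mul_div_sqrt k)]
  have hbound (k : ℝ) : ‖toEuclideanCLM (𝕜 := ℂ) (n := Fin 2) (S k)‖ ≤ √2 ∧
      ‖toEuclideanCLM (𝕜 := ℂ) (n := Fin 2) (S k)⁻¹‖ ≤ √2 := by
    rw [norm_toEuclideanCLM_of_conjTranspose_mul_self_eq_smul_one (hSk k),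
      norm_toEuclideanCLM_inv_of_conjTranspose_mul_self_eq_smul_one two_ne_zero (hSk k)]
    norm_num
  refine ⟨⟨√2, by positivity, hbound⟩, ⟨√2 + √2, ?_⟩⟩
  rintro _ ⟨k, rfl⟩
  exact add_le_add (hbound k).1 (hbound k).2
end

section
/- For every real number k₀ there exists a constant c > 0 such that for all k ∈ ℝ and all sign choices s₁, s₂ ∈ {−1, 1}, one has |s₁·√(1+k²) − √(1+k₀²) − s₂·√(1+(k−k₀)²)| ≥ c. -/
/-- Triangle-type inequality for the Klein–Gordon dispersion relation. -/
lemma kg_aux (a b : ℝ) : Real.sqrt (1 + a ^ 2) ≤ Real.sqrt (1 + b ^ 2) + |a - b| := by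
  have hb : Real.sqrt (1 + b ^ 2) ^ 2 = 1 + b ^ 2 :=
    Real.sq_sqrt (by positivity)
  have hble : |b| ≤ Real.sqrt (1 + b ^ 2) := by
    rw [← Real.sqrt_sq_eq_abs]
    exact Real.sqrt_le_sqrt (by nlinarith)
  have habs : |a| ≤ |b| + |a - b| := by
    have := abs_sub_abs_le_abs_sub a b
    linarith
  rw [show Real.sqrt (1 + b ^ 2) + |a - b|
      = Real.sqrt ((Real.sqrt (1 + b ^ 2) + |a - b|) ^ 2) from
      (Real.sqrt_sq (by positivity)).symm]
  apply Real.sqrt_le_sqrt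
  nlinarith [sq_abs a, sq_abs b, sq_abs (a - b), abs_nonneg (a - b), abs_nonneg b, abs_nonneg a,
    mul_le_mul_of_nonneg_right hble (abs_nonneg (a - b)),
    mul_le_mul_of_nonneg_right habs (abs_nonneg a)]

/-- Minkowski-type lower bound: `√(1+k²) + √(1+(k-k₀)²) ≥ √(4+k₀²)`. -/
lemma kg_aux2 (k k₀ : ℝ) :
    Real.sqrt (4 + k₀ ^ 2) ≤ Real.sqrt (1 + k ^ 2) + Real.sqrt (1 + (k - k₀) ^ 2) := by
  set A := Real.sqrt (1 + k ^ 2) with hA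
  set C := Real.sqrt (1 + (k - k₀) ^ 2) with hC
  have hA2 : A ^ 2 = 1 + k ^ 2 := Real.sq_sqrt (by positivity)
  have hC2 : C ^ 2 = 1 + (k - k₀) ^ 2 := Real.sq_sqrt (by positivity)
  have hA0 : 0 ≤ A := Real.sqrt_nonneg _
  have hC0 : 0 ≤ C := Real.sqrt_nonneg _
  have hac : 1 - k * (k - k₀) ≤ A * C := by
    rcases le_or_gt (1 - k * (k - k₀)) 0 with h | h
    · exact h.trans (mul_nonneg hA0 hC0)
    · nlinarith [mul_nonneg hA0 hC0, sq_nonneg (2 * k - k₀), sq_nonneg (A * C)]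
  rw [show A + C = Real.sqrt ((A + C) ^ 2) from (Real.sqrt_sq (by positivity)).symm]
  apply Real.sqrt_le_sqrt
  nlinarith [hac]

/-- Quadratic non-resonance condition for the Klein–Gordon dispersion relation:
`|s₁√(1+k²) − √(1+k₀²) − s₂√(1+(k−k₀)²)|` is uniformly bounded below. -/
theorem kleinGordon_quadratic_nonresonance (k₀ : ℝ) :
    ∃ c : ℝ, 0 < c ∧ ∀ k s₁ s₂ : ℝ, (s₁ = -1 ∨ s₁ = 1) → (s₂ = -1 ∨ s₂ = 1) →
      c ≤ |s₁ * Real.sqrt (1 + k ^ 2) - Real.sqrt (1 + k₀ ^ 2)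
            - s₂ * Real.sqrt (1 + (k - k₀) ^ 2)| := by
  set B := Real.sqrt (1 + k₀ ^ 2) with hB
  have hBk : |k₀| < B := by
    rw [← Real.sqrt_sq_eq_abs]
    exact Real.sqrt_lt_sqrt (sq_nonneg _) (by linarith)
  have hB4 : B < Real.sqrt (4 + k₀ ^ 2) :=
    Real.sqrt_lt_sqrt (by positivity) (by linarith)
  refine ⟨min (B - |k₀|) (Real.sqrt (4 + k₀ ^ 2) - B),
    lt_min (by linarith) (by linarith), ?_⟩
  intro k s₁ s₂ hs₁ hs₂
  have hc1 : min (B - |k₀|) (Real.sqrt (4 + k₀ ^ 2) - B) ≤ B - |k₀| := min_le_left _ _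
  have hc2 : min (B - |k₀|) (Real.sqrt (4 + k₀ ^ 2) - B) ≤ Real.sqrt (4 + k₀ ^ 2) - B :=
    min_le_right _ _
  set A := Real.sqrt (1 + k ^ 2) with hA
  set C := Real.sqrt (1 + (k - k₀) ^ 2) with hC
  have hA0 : 0 ≤ A := Real.sqrt_nonneg _
  have hC0 : 0 ≤ C := Real.sqrt_nonneg _
  have key1 : A ≤ C + |k₀| := by
    have := kg_aux k (k - k₀)
    simpa using this
  have key1' : C ≤ A + |k₀| := by
    have := kg_aux (k - k₀) k
    have h : |k - k₀ - k| = |k₀| := by rw [show k - k₀ - k = -k₀ by ring, abs_neg]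
    rwa [h] at this
  have key2 : Real.sqrt (4 + k₀ ^ 2) ≤ A + C := kg_aux2 k k₀
  rcases hs₁ with h₁ | h₁ <;> rcases hs₂ with h₂ | h₂ <;> subst h₁ <;> subst h₂
  · -- s₁ = -1, s₂ = -1 : |−A−B+C| ≥ A+B−C ≥ B−|k₀|
    have := neg_abs_le ((-1) * A - B - (-1) * C)
    linarith
  · -- s₁ = -1, s₂ = 1 : |−A−B−C| = A+B+C ≥ B
    have := neg_abs_le ((-1) * A - B - 1 * C)
    linarith
  · -- s₁ = 1, s₂ = -1 : |A−B+C| ≥ A+C−B ≥ √(4+k₀²)−B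
    have := le_abs_self (1 * A - B - (-1) * C)
    linarith
  · -- s₁ = 1, s₂ = 1 : |A−B−C| ≥ B+C−A ≥ B−|k₀|
    have := neg_abs_le (1 * A - B - 1 * C)
    linarith
end

section
/- Let k₀ be a nonzero real number. Then for every sign s ∈ {−1, 1}, every integer m ∈ {−3, −2, 0, 2, 3}, and every integer q with |q| ≤ 3 and q ≡ m (mod 2), one has s·√(1+m²k₀²) ≠ q·√(1+k₀²). -/
/-- Quadratic and cubic non-resonance conditions for wave-packet interactions
with the Klein–Gordon dispersion branches `±√(1+k²)` at collinear wave
numbers: for `k₀ ≠ 0`, `m ∈ {−3,−2,0,2,3}`, `|q| ≤ 3`, `q ≡ m (mod 2)`,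
one has `s·√(1+m²k₀²) ≠ q·√(1+k₀²)`. -/
theorem kleinGordon_mixed_terms_nonresonance
    (k₀ : ℝ) (hk₀ : k₀ ≠ 0) (s : ℝ) (hs : s = 1 ∨ s = -1)
    (m : ℤ) (hm : m = -3 ∨ m = -2 ∨ m = 0 ∨ m = 2 ∨ m = 3)
    (q : ℤ) (hq : |q| ≤ 3) (hpar : q ≡ m [ZMOD 2]) :
    s * Real.sqrt (1 + (m : ℝ) ^ 2 * k₀ ^ 2)
      ≠ (q : ℝ) * Real.sqrt (1 + k₀ ^ 2) := by
  intro h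
  have hA : (0:ℝ) ≤ 1 + (m : ℝ) ^ 2 * k₀ ^ 2 := by positivity
  have hB : (0:ℝ) ≤ 1 + k₀ ^ 2 := by positivity
  have hs2 : s ^ 2 = 1 := by rcases hs with h'|h' <;> simp [h']
  have h2 := congrArg (· ^ 2) h
  simp only [mul_pow, Real.sq_sqrt hA, Real.sq_sqrt hB, hs2, one_mul] at h2
  have hk2 : (0:ℝ) < k₀ ^ 2 := by positivity
  obtain ⟨hq1, hq2⟩ := abs_le.mp hq
  interval_cases q <;>
    rcases hm with rfl | rfl | rfl | rfl | rfl <;>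
    revert hpar <;> first
      | (intro hpar; exact absurd hpar (by decide))
      | (intro _; push_cast at h2; nlinarith [hk2])
end
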